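/- Let k be a field of characteristic p > 0, 𝔽_p ⊆ k, and let t, u be indeterminates with k = 𝔽_p(t^p, u^p). Inside k(t,u)[X], the k-algebra B = k[X^p, t + X + uX^p] satisfies B ⊗_k k(t,u) ≅ k(t,u)^{[1]}, i.e., B is an 𝔸¹-form over k with respect to the extension k(t,u)/k. -/

import Mathlib

set_option synthInstance.maxHeartbeats 1000000
set_option maxHeartbeats 1000000

/-- `L = 𝔽_p(t,u)`, the rational function field in two variables over `𝔽_p`. -/
noncomputable abbrev Lfun (p : ℕ) [Fact p.Prime] : Type :=
  FractionRing (MvPolynomial (Fin 2) (ZMod p))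

/-- The indeterminate `t ∈ L`. -/
noncomputable abbrev tvar (p : ℕ) [Fact p.Prime] : Lfun p :=
  algebraMap (MvPolynomial (Fin 2) (ZMod p)) (Lfun p) (MvPolynomial.X 0)

/-- The indeterminate `u ∈ L`. -/
noncomputable abbrev uvar (p : ℕ) [Fact p.Prime] : Lfun p :=
  algebraMap (MvPolynomial (Fin 2) (ZMod p)) (Lfun p) (MvPolynomial.X 1)

/-- `k = 𝔽_p(tᵖ, uᵖ)` as an intermediate field of `𝔽_p ⊆ 𝔽_p(t,u)`. -/
noncomputable abbrev Kfun (p : ℕ) [Fact p.Prime] : IntermediateField (ZMod p) (Lfun p) :=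
  IntermediateField.adjoin (ZMod p) {tvar p ^ p, uvar p ^ p}

/-- `B = k[Xᵖ, t + X + uXᵖ]`, a `k`-subalgebra of `L[X]`. -/
noncomputable abbrev Bsub (p : ℕ) [Fact p.Prime] : Subalgebra (Kfun p) (Polynomial (Lfun p)) :=
  Algebra.adjoin (Kfun p)
    {(Polynomial.X : Polynomial (Lfun p)) ^ p,
      Polynomial.C (tvar p) + Polynomial.X + Polynomial.C (uvar p) * Polynomial.X ^ p}
/-! Write `g = t + X + uXᵖ ∈ L[X]`. Since `X = g - t - uXᵖ`, the multiplication map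
`L ⊗_k B → L[X]` is surjective. For injectivity: as `gᵖ = tᵖ + Xᵖ + uᵖXᵖ²` has coefficients in `k`,
`B` is spanned over `k` by the elements `Xᵖⁱ gʲ` with `j < p`, and these stay linearly independent
over `L`. Indeed `g' = 1` while every element of `L[Xᵖ]` has derivative zero, so differentiating a
relation `∑_{j < m} qⱼ gʲ = 0` with `qⱼ ∈ L[Xᵖ]` gives the shorter relation `∑ (j + 1) qⱼ₊₁ gʲ = 0`,
whose coefficients `j + 1` are nonzero as long as `m ≤ p`. -/

open Polynomial

theorem Algebra.adjoin_toSubmodule_le_span {R A ι : Type*} [CommSemiring R] [Semiring A]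
    [Algebra R A] {s : Set A} {v : ι → A} (one_mem : 1 ∈ Submodule.span R (Set.range v))
    (mul_mem : ∀ x ∈ s, ∀ i, x * v i ∈ Submodule.span R (Set.range v)) :
    Subalgebra.toSubmodule (Algebra.adjoin R s) ≤ Submodule.span R (Set.range v) := by
  rw [Algebra.adjoin_toSubmodule_le]
  intro z hz
  induction hz using Submonoid.closure_induction_left with
  | one => exact one_mem
  | mul_left x hx y hy_closure hy =>
    clear hy_closure
    induction hy using Submodule.span_induction with
    | mem w hw => obtain ⟨i, rfl⟩ := hw; exact mul_mem x hx i
    | zero => simp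
    | add a b _ _ ha hb => rw [mul_add]; exact add_mem ha hb
    | smul r a _ ha => rw [mul_smul_comm]; exact Submodule.smul_mem _ r ha

theorem Algebra.TensorProduct.lift_ofId_injective_of_basis {k L A B ι : Type*} [CommRing k]
    [CommRing L] [Algebra k L] [CommRing A] [Algebra k A] [Algebra L A] [IsScalarTower k L A]
    [CommRing B] [Algebra k B] (b : Module.Basis ι k B) (f : B →ₐ[k] A)
    (hf : LinearIndependent L (f ∘ b)) :
    Function.Injective (lift (Algebra.ofId L A) f fun _ _ => .all _ _) := by
  have h : (lift (Algebra.ofId L A) f fun _ _ => .all _ _).toLinearMap =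
      (b.baseChange L).constr L (f ∘ b) :=
    (b.baseChange L).ext fun i => by rw [(b.baseChange L).constr_basis]; simp
  have := (b.baseChange L).injective_constr_of_linearIndependent (R₂ := L) hf
  rwa [← h] at this

theorem Subalgebra.lift_ofId_val_injective {k L A ι : Type*} [Field k] [CommRing L]
    [Nontrivial L] [Algebra k L] [CommRing A] [Algebra k A] [Algebra L A] [IsScalarTower k L A]
    (B : Subalgebra k A) {v : ι → A} (hvB : ∀ i, v i ∈ B)
    (hBv : Subalgebra.toSubmodule B ≤ Submodule.span k (Set.range v))
    (hv : LinearIndependent L v) :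
    Function.Injective
      (Algebra.TensorProduct.lift (Algebra.ofId L A) B.val fun _ _ => .all _ _) := by
  let w : ι → B := fun i => ⟨v i, hvB i⟩
  have hw : LinearIndependent k w := .of_comp B.val.toLinearMap (hv.restrict_scalars' k)
  have hspan : ⊤ ≤ Submodule.span k (Set.range w) := by
    rintro x -
    have hx : (x : A) ∈ (Submodule.span k (Set.range w)).map B.val.toLinearMap := by
      rw [Submodule.map_span, ← Set.range_comp]
      exact hBv x.2
    obtain ⟨y, hy, hyx⟩ := hx
    rwa [Subtype.val_injective hyx] at hy
  exact Algebra.TensorProduct.lift_ofId_injective_of_basis (.mk hw hspan) B.val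
    (by simpa [w, Function.comp_def] using hv)

namespace Polynomial

theorem surjective_of_X_mem_range {R A : Type*} [CommSemiring R] [Semiring A] [Algebra R A]
    (f : A →ₐ[R] R[X]) (h : X ∈ f.range) : Function.Surjective f := by
  rw [← AlgHom.range_eq_top, eq_top_iff, ← adjoin_X]
  exact Algebra.adjoin_le (Set.singleton_subset_iff.mpr h)

section CharP

variable {R : Type*} [CommRing R] {p : ℕ} [CharP R p]

theorem derivative_eq_zero_of_mem_adjoin_X_pow {f : R[X]} (hf : f ∈ Algebra.adjoin R {X ^ p}) :
    derivative f = 0 := by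
  induction hf using Algebra.adjoin_induction with
  | mem x hx =>
    rw [Set.mem_singleton_iff.mp hx, derivative_X_pow, CharP.cast_eq_zero, C_0, zero_mul]
  | algebraMap r => exact derivative_C
  | add x y _ _ hx hy => rw [derivative_add, hx, hy, add_zero]
  | mul x y _ _ hx hy => rw [derivative_mul, hx, hy, zero_mul, mul_zero, add_zero]

variable [IsDomain R] {g : R[X]}

theorem eq_zero_of_sum_mul_pow_eq_zero (hg : derivative g = 1) {m : ℕ} (hm : m ≤ p)
    (q : Fin m → R[X]) (hq : ∀ j, derivative (q j) = 0) (hsum : ∑ j, q j * g ^ (j : ℕ) = 0)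
    (j : Fin m) : q j = 0 := by
  induction m with
  | zero => exact j.elim0
  | succ m ih =>
    have hderiv : ∑ j : Fin m, C ((j : R) + 1) * q j.succ * g ^ (j : ℕ) = 0 := by
      have := congrArg derivative hsum
      rw [derivative_sum, Fin.sum_univ_succ] at this
      simp only [derivative_mul, hq, Fin.val_succ, Fin.val_zero, derivative_pow_succ, hg,
        pow_zero, derivative_one] at this
      simpa [mul_comm, mul_left_comm, mul_assoc] using this
    have hsucc (j : Fin m) : q j.succ = 0 := by
      have hunit : C ((j : R) + 1) ≠ 0 := by
        rw [Ne, C_eq_zero, ← Nat.cast_succ, CharP.cast_eq_zero_iff R p]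
        exact Nat.not_dvd_of_pos_of_lt j.succ_pos (by omega)
      refine (mul_eq_zero.mp (ih (by omega) _ (fun j => ?_) hderiv j)).resolve_left hunit
      rw [derivative_mul, derivative_C, hq, zero_mul, mul_zero, add_zero]
    have hzero : q 0 = 0 := by simpa [Fin.sum_univ_succ, hsucc] using hsum
    exact Fin.cases hzero hsucc j

theorem linearIndependent_pow_of_derivative_eq_one (S : Subalgebra R R[X])
    (hS : ∀ s ∈ S, derivative s = 0) (hg : derivative g = 1) :
    LinearIndependent S (fun j : Fin p => g ^ (j : ℕ)) := by
  rw [Fintype.linearIndependent_iff]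
  intro c hc j
  exact Subtype.ext <| eq_zero_of_sum_mul_pow_eq_zero hg le_rfl (fun j => (c j : R[X]))
    (fun j => hS _ (c j).2) hc j

theorem linearIndependent_X_pow_mul_pow [NeZero p] (hg : derivative g = 1) :
    LinearIndependent R (fun ij : ℕ × Fin p => X ^ (p * ij.1) * g ^ (ij.2 : ℕ)) := by
  let S := Algebra.adjoin R {(X : R[X]) ^ p}
  have hXpow (i : ℕ) : (X : R[X]) ^ (p * i) ∈ S := by
    rw [pow_mul]
    exact pow_mem (Algebra.subset_adjoin (Set.mem_singleton _)) i
  have hX : LinearIndependent R (fun i : ℕ => (⟨X ^ (p * i), hXpow i⟩ : S)) := by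
    refine .of_comp S.val.toLinearMap ?_
    have hmono := (basisMonomials R).linearIndependent.comp (p * ·)
      (mul_right_injective₀ (NeZero.ne p))
    convert hmono using 1
    · funext i
      simp [coe_basisMonomials, monomial_one_right_eq_X_pow]
    · rfl
  exact (linearIndependent_smul hX <| linearIndependent_pow_of_derivative_eq_one S
    (fun _ => derivative_eq_zero_of_mem_adjoin_X_pow) hg :)

end CharP

end Polynomial

namespace Bsub

variable (p : ℕ) [Fact p.Prime]

noncomputable abbrev gen : (Lfun p)[X] := C (tvar p) + X + C (uvar p) * X ^ p

noncomputable def basisFamily (ij : ℕ × Fin p) : (Lfun p)[X] :=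
  X ^ (p * ij.1) * gen p ^ (ij.2 : ℕ)

theorem derivative_gen : derivative (gen p) = 1 := by
  simp [derivative_X_pow]

theorem gen_pow_char : gen p ^ p = C (tvar p ^ p) + X ^ p + C (uvar p ^ p) * X ^ (p * p) := by
  rw [add_pow_char, add_pow_char, mul_pow, ← C_pow, ← C_pow, ← pow_mul]

theorem X_pow_mem : (X : (Lfun p)[X]) ^ p ∈ Bsub p :=
  Algebra.subset_adjoin (Set.mem_insert _ _)

theorem gen_mem : gen p ∈ Bsub p :=
  Algebra.subset_adjoin (Set.mem_insert_of_mem _ rfl)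

theorem basisFamily_mem (ij : ℕ × Fin p) : basisFamily p ij ∈ Bsub p := by
  rw [basisFamily, pow_mul]
  exact mul_mem (pow_mem (X_pow_mem p) _) (pow_mem (gen_mem p) _)

theorem linearIndependent_basisFamily : LinearIndependent (Lfun p) (basisFamily p) :=
  linearIndependent_X_pow_mul_pow (derivative_gen p)

theorem X_pow_mul_basisFamily (i : ℕ) (j : Fin p) :
    X ^ p * basisFamily p (i, j) = basisFamily p (i + 1, j) := by
  simp only [basisFamily]
  ring

theorem gen_mul_basisFamily_mem_span (ij : ℕ × Fin p) :
    gen p * basisFamily p ij ∈ Submodule.span (Kfun p) (Set.range (basisFamily p)) := by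
  obtain ⟨i, j⟩ := ij
  have hmem (ij) : basisFamily p ij ∈ Submodule.span (Kfun p) (Set.range (basisFamily p)) :=
    Submodule.subset_span ⟨ij, rfl⟩
  have hmul : gen p * basisFamily p (i, j) = X ^ (p * i) * gen p ^ ((j : ℕ) + 1) := by
    simp only [basisFamily]
    ring
  by_cases hj : (j : ℕ) + 1 < p
  · rw [hmul]
    exact hmem (i, ⟨j + 1, hj⟩)
  have hp : 0 < p := NeZero.pos p
  have ht : tvar p ^ p ∈ Kfun p := IntermediateField.subset_adjoin _ _ (by simp)
  have hu : uvar p ^ p ∈ Kfun p := IntermediateField.subset_adjoin _ _ (by simp)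
  have hreduce : gen p * basisFamily p (i, j) =
      (⟨_, ht⟩ : Kfun p) • basisFamily p (i, ⟨0, hp⟩) + basisFamily p (i + 1, ⟨0, hp⟩)
        + (⟨_, hu⟩ : Kfun p) • basisFamily p (i + p, ⟨0, hp⟩) := by
    rw [hmul, show (j : ℕ) + 1 = p by omega, gen_pow_char]
    simp only [Algebra.smul_def, Polynomial.algebraMap_apply, IntermediateField.algebraMap_apply,
      basisFamily]
    ring
  rw [hreduce]
  exact add_mem (add_mem (Submodule.smul_mem _ _ (hmem _)) (hmem _))
    (Submodule.smul_mem _ _ (hmem _))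

theorem toSubmodule_le_span_basisFamily :
    Subalgebra.toSubmodule (Bsub p) ≤ Submodule.span (Kfun p) (Set.range (basisFamily p)) := by
  refine Algebra.adjoin_toSubmodule_le_span
    (Submodule.subset_span ⟨(0, ⟨0, NeZero.pos p⟩), by simp [basisFamily]⟩) ?_
  rintro x (rfl | rfl) ⟨i, j⟩
  · rw [X_pow_mul_basisFamily]
    exact Submodule.subset_span ⟨_, rfl⟩
  · exact gen_mul_basisFamily_mem_span p (i, j)

noncomputable abbrev baseChangeMap :
    TensorProduct (Kfun p) (Lfun p) (Bsub p) →ₐ[Lfun p] (Lfun p)[X] :=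
  Algebra.TensorProduct.lift (Algebra.ofId (Lfun p) (Lfun p)[X]) (Bsub p).val fun _ _ => .all _ _

theorem baseChangeMap_injective : Function.Injective (baseChangeMap p) :=
  (Bsub p).lift_ofId_val_injective (basisFamily_mem p) (toSubmodule_le_span_basisFamily p)
    (linearIndependent_basisFamily p)

theorem baseChangeMap_surjective : Function.Surjective (baseChangeMap p) := by
  refine surjective_of_X_mem_range _ ?_
  have hC (a : Lfun p) : C a ∈ (baseChangeMap p).range := by
    simpa using (baseChangeMap p).range.algebraMap_mem a
  have hB {f} (hf : f ∈ Bsub p) : f ∈ (baseChangeMap p).range := ⟨1 ⊗ₜ ⟨f, hf⟩, by simp⟩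
  rw [show (X : (Lfun p)[X]) = gen p - C (tvar p) - C (uvar p) * X ^ p by ring]
  exact sub_mem (sub_mem (hB (gen_mem p)) (hC _)) (mul_mem (hC _) (hB (X_pow_mem p)))

end Bsub

/-- `B = k[Xᵖ, t + X + uXᵖ]` satisfies `B ⊗_k k(t,u) ≅ k(t,u)^{[1]}`,
i.e. `B` is an `𝔸¹`-form over `k = 𝔽_p(tᵖ,uᵖ)` with respect to `𝔽_p(t,u)/k`. -/
theorem stmt10 (p : ℕ) [Fact p.Prime] :
    Nonempty ((TensorProduct (Kfun p) (Lfun p) (Bsub p)) ≃ₐ[Lfun p] Polynomial (Lfun p)) :=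
  ⟨.ofBijective (Bsub.baseChangeMap p)
    ⟨Bsub.baseChangeMap_injective p, Bsub.baseChangeMap_surjective p⟩⟩
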